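/- arXiv:1411.6668 — 3 statements merged into one kernel-verified Lean document; each statement's English description precedes it below -/
import Mathlib

section
/- If a finite simple graph H contains at least two distinct cycles, but every proper subgraph of H contains at most one cycle, then H is either the union of two cycles intersecting in at most one vertex, or a theta graph. -/
open SimpleGraph

/-- The degree of a vertex, as the cardinality of its neighbor set. -/
noncomputable def deg {V : Type} (G : SimpleGraph V) (v : V) : ℕ :=
  (G.neighborSet v).ncard

/-- The potential of a finite graph: `5 n(G) - 4 e(G)`. -/
noncomputable def pot {V : Type} [Fintype V] (G : SimpleGraph V) : ℤ :=
  5 * (Fintype.card V : ℤ) - 4 * (G.edgeSet.ncard : ℤ)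

/-- A graph is 5/2-critical if it has no homomorphism to the 5-cycle
but every proper subgraph has one. -/
def Critical52 {V : Type} (G : SimpleGraph V) : Prop :=
  IsEmpty (G →g cycleGraph 5) ∧
  ∀ H : G.Subgraph, H ≠ ⊤ → Nonempty (H.coe →g cycleGraph 5)

/-- The exceptional graph `E₁`: a 9-cycle `0 1 2 3 4 5 6 7 8` together
with a vertex `9` adjacent to `0`, `3` and `6`. -/
def E1 : SimpleGraph (Fin 10) := SimpleGraph.fromEdgeSet
  {s(0,1), s(1,2), s(2,3), s(3,4), s(4,5), s(5,6), s(6,7), s(7,8), s(8,0),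
   s(9,0), s(9,3), s(9,6)}

/-- The exceptional graph `E₂`: two 5-cycles `0 1 2 3 4` and `0 1 5 6 7`
sharing exactly the edge `01`, together with a path `3 8 9 6`. -/
def E2 : SimpleGraph (Fin 10) := SimpleGraph.fromEdgeSet
  {s(0,1), s(1,2), s(2,3), s(3,4), s(4,0),
   s(1,5), s(5,6), s(6,7), s(7,0),
   s(3,8), s(8,9), s(9,6)}

/-- A smallest counterexample: a 5/2-critical graph, not isomorphic to `C₃`, `E₁`, `E₂`,
with potential at least 2, such that every smaller 5/2-critical graph not isomorphic
to `C₃`, `E₁`, `E₂` has potential at most 1. -/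
def SmallestCex {V : Type} [Fintype V] (G : SimpleGraph V) : Prop :=
  Critical52 G ∧ IsEmpty (G ≃g cycleGraph 3) ∧ IsEmpty (G ≃g E1) ∧ IsEmpty (G ≃g E2) ∧
  2 ≤ pot G ∧
  ∀ (m : ℕ) (H : SimpleGraph (Fin m)), Critical52 H →
    IsEmpty (H ≃g cycleGraph 3) → IsEmpty (H ≃g E1) → IsEmpty (H ≃g E2) →
    m < Fintype.card V → pot H ≤ 1

/-- A string: a path of positive length whose endvertices have degree at least 3
and whose internal vertices have degree 2. A `k`-string is a string of length `k+1`. -/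
def IsString {V : Type} (G : SimpleGraph V) {u v : V} (p : G.Walk u v) : Prop :=
  p.IsPath ∧ 0 < p.length ∧ 3 ≤ deg G u ∧ 3 ≤ deg G v ∧
  ∀ w ∈ p.support, w ≠ u → w ≠ v → deg G w = 2

/-- `v` lies on a 5-cycle of `G`. -/
def InFiveCycle {V : Type} (G : SimpleGraph V) (v : V) : Prop :=
  ∃ (w : V) (c : G.Walk w w), c.IsCycle ∧ c.length = 5 ∧ v ∈ c.support

/-- `v` is a `(k₁,k₂,k₃)`-vertex: it has degree 3 and is the end of a `k₁`-string,
a `k₂`-string and a `k₃`-string leaving `v` through its three distinct edges. -/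
def IsVertex3 {V : Type} (G : SimpleGraph V) (v : V) (k1 k2 k3 : ℕ) : Prop :=
  deg G v = 3 ∧ ∃ (u1 u2 u3 : V) (p1 : G.Walk v u1) (p2 : G.Walk v u2) (p3 : G.Walk v u3),
    IsString G p1 ∧ IsString G p2 ∧ IsString G p3 ∧
    p1.getVert 1 ≠ p2.getVert 1 ∧ p1.getVert 1 ≠ p3.getVert 1 ∧ p2.getVert 1 ≠ p3.getVert 1 ∧
    p1.length = k1 + 1 ∧ p2.length = k2 + 1 ∧ p3.length = k3 + 1

/-- `v` is a `(k₁,k₂,k₃,k₄)`-vertex: it has degree 4 and is the end of strings of the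
corresponding lengths leaving `v` through its four distinct edges. -/
def IsVertex4 {V : Type} (G : SimpleGraph V) (v : V) (k1 k2 k3 k4 : ℕ) : Prop :=
  deg G v = 4 ∧ ∃ (u1 u2 u3 u4 : V) (p1 : G.Walk v u1) (p2 : G.Walk v u2)
    (p3 : G.Walk v u3) (p4 : G.Walk v u4),
    IsString G p1 ∧ IsString G p2 ∧ IsString G p3 ∧ IsString G p4 ∧
    p1.getVert 1 ≠ p2.getVert 1 ∧ p1.getVert 1 ≠ p3.getVert 1 ∧ p1.getVert 1 ≠ p4.getVert 1 ∧
    p2.getVert 1 ≠ p3.getVert 1 ∧ p2.getVert 1 ≠ p4.getVert 1 ∧ p3.getVert 1 ≠ p4.getVert 1 ∧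
    p1.length = k1 + 1 ∧ p2.length = k2 + 1 ∧ p3.length = k3 + 1 ∧ p4.length = k4 + 1

/-- `H` contains at least two distinct cycles, where cycles are counted as subgraphs,
i.e. two cycles are distinct if their edge sets differ. -/
def TwoDistinctCycles {V : Type} (H : SimpleGraph V) : Prop :=
  ∃ (v1 v2 : V) (c1 : H.Walk v1 v1) (c2 : H.Walk v2 v2),
    c1.IsCycle ∧ c2.IsCycle ∧ {e | e ∈ c1.edges} ≠ {e | e ∈ c2.edges}

/-- The degree of a 5-cycle (cell) `c` in `G`: the number of strings not contained in `c`
that intersect `c`, strings being counted by their edge sets. -/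
noncomputable def cellDegree {V : Type} (G : SimpleGraph V) {w : V} (c : G.Walk w w) : ℕ :=
  {S : Set (Sym2 V) | ∃ (u v : V) (p : G.Walk u v), IsString G p ∧ S = {e | e ∈ p.edges} ∧
    ¬ S ⊆ {e | e ∈ c.edges} ∧ ∃ x ∈ p.support, x ∈ c.support}.ncard

/-! Take two cycles `C₁`, `C₂` with different edge sets. The subgraph `C₁ ∪ C₂` contains both, so
by minimality it is all of `H`; this settles the case where they share at most one vertex.
Otherwise, say `C₂` has an edge `e` outside `C₁`. Cutting `C₂` at two common vertices gives a path
through `e` with both ends on `C₁`, and inside it an ear `Q` of `C₁` with an edge outside `C₁`: a path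
between vertices `u ≠ w` of `C₁` whose interior avoids `C₁`. Cutting `C₁` at `u` and `w` into paths
`P₁`, `P₂`, the cycle `P₁ ∪ Q` differs from `C₁`, so minimality gives `H = P₁ ∪ P₂ ∪ Q`. -/

namespace SimpleGraph

variable {V : Type*} {G : SimpleGraph V} {u v w : V}

def AtMostOneCycle (G : SimpleGraph V) : Prop :=
  ∀ (v₁ v₂ : V) (c₁ : G.Walk v₁ v₁) (c₂ : G.Walk v₂ v₂),
    c₁.IsCycle → c₂.IsCycle → c₁.edgeSet = c₂.edgeSet

def Walk.InternallyDisjoint (p q : G.Walk u w) : Prop :=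
  ∀ x, x ∈ p.support → x ∈ q.support → x = u ∨ x = w

def IsThetaGraph (G : SimpleGraph V) : Prop :=
  ∃ u w, u ≠ w ∧ ∃ p₁ p₂ p₃ : G.Walk u w,
    p₁.IsPath ∧ p₂.IsPath ∧ p₃.IsPath ∧
    p₁.InternallyDisjoint p₂ ∧ p₁.InternallyDisjoint p₃ ∧ p₂.InternallyDisjoint p₃ ∧
    ¬(p₁.length = 1 ∧ p₂.length = 1) ∧ ¬(p₁.length = 1 ∧ p₃.length = 1) ∧
    ¬(p₂.length = 1 ∧ p₃.length = 1) ∧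
    G.edgeSet = p₁.edgeSet ∪ p₂.edgeSet ∪ p₃.edgeSet ∧
    ∀ x, x ∈ p₁.support ∨ x ∈ p₂.support ∨ x ∈ p₃.support

namespace Walk

lemma IsCycle.exists_isCycle_coe_subgraph {K : G.Subgraph} {c : G.Walk v v} (hc : c.IsCycle)
    (h : c.toSubgraph ≤ K) :
    ∃ (x : K.verts) (d : K.coe.Walk x x), d.IsCycle ∧ Sym2.map K.hom '' d.edgeSet = c.edgeSet := by
  have hmap := (map_map (Subgraph.inclusion h) K.hom c.mapToSubgraph).trans c.map_mapToSubgraph_hom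
  exact ⟨_, _, IsCycle.of_map (f := K.hom) (hmap ▸ hc), by rw [← edgeSet_map, hmap]; rfl⟩

lemma IsCycle.isPath_and_internallyDisjoint_of_append {p : G.Walk u w} {q : G.Walk w u}
    (hc : (p.append q).IsCycle) (huw : u ≠ w) :
    p.IsPath ∧ q.IsPath ∧ p.InternallyDisjoint q.reverse := by
  have hp := hc.isPath_of_append_left (not_nil_of_ne huw.symm)
  have hq := hc.isPath_of_append_right (not_nil_of_ne huw)
  refine ⟨hp, hq, fun x hxp hxq ↦ ?_⟩
  rw [support_reverse, List.mem_reverse] at hxq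
  by_contra! hx
  have hnd := hc.support_nodup
  rw [tail_support_append, List.nodup_append'] at hnd
  exact hnd.2.2 ((p.mem_support_iff.mp hxp).resolve_left hx.1)
    ((q.mem_support_iff.mp hxq).resolve_left hx.2)

lemma IsPath.isCycle_append_reverse {p q : G.Walk u w} (hp : p.IsPath) (hq : q.IsPath)
    (hpq : p.InternallyDisjoint q) (hne : p ≠ q) : (p.append q.reverse).IsCycle := by
  refine hp.isCycle_append hq.reverse (fun x hxp hxq ↦ ?_) ?_
  · have hx' : x ∈ q.reverse.support := List.mem_of_mem_tail hxq
    rw [support_reverse, List.mem_reverse] at hx'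
    rcases hpq x (List.mem_of_mem_tail hxp) hx' with rfl | rfl
    · exact (List.nodup_cons.mp (p.cons_tail_support ▸ hp.support_nodup)).1 hxp
    · exact (List.nodup_cons.mp (q.reverse.cons_tail_support ▸ hq.reverse.support_nodup)).1 hxq
  · by_contra! hlen
    rw [length_reverse] at hlen
    exact hne (eq_of_length_le_one hlen.1 hlen.2)

lemma IsCycle.exists_isCycle_append {c : G.Walk v v} (hc : c.IsCycle) (hu : u ∈ c.support)
    (hw : w ∈ c.support) :
    ∃ (p₁ : G.Walk u w) (p₂ : G.Walk w u),
      (p₁.append p₂).IsCycle ∧ (p₁.append p₂).toSubgraph = c.toSubgraph := by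
  classical
  have hw' : w ∈ (c.rotate u hu).support := (c.mem_support_rotate_iff u hu).mpr hw
  refine ⟨(c.rotate u hu).takeUntil w hw', (c.rotate u hu).dropUntil w hw', ?_, ?_⟩ <;>
    rw [take_spec]
  · exact hc.rotate hu
  · exact toSubgraph_rotate c hu

lemma IsCycle.exists_isPath_mem_edges {c : G.Walk v v} (hc : c.IsCycle) (hu : u ∈ c.support)
    (hw : w ∈ c.support) (huw : u ≠ w) {e : Sym2 V} (he : e ∈ c.edges) :
    ∃ p : G.Walk u w, p.IsPath ∧ e ∈ p.edges := by
  obtain ⟨p₁, p₂, hcyc, hsub⟩ := hc.exists_isCycle_append hu hw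
  obtain ⟨hp₁, hp₂, -⟩ := hcyc.isPath_and_internallyDisjoint_of_append huw
  rw [← mem_edges_toSubgraph, ← hsub, mem_edges_toSubgraph, edges_append, List.mem_append] at he
  rcases he with he | he
  · exact ⟨p₁, hp₁, he⟩
  · exact ⟨p₂.reverse, hp₂.reverse, by rwa [edges_reverse, List.mem_reverse]⟩

lemma IsPath.exists_ear {S : Set V} {P : Sym2 V → Prop} {p : G.Walk u w} (hp : p.IsPath)
    (hu : u ∈ S) (hw : w ∈ S) (he : ∃ e ∈ p.edges, P e) :
    ∃ (a b : V) (q : G.Walk a b), q.IsPath ∧ a ∈ S ∧ b ∈ S ∧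
      (∀ x ∈ q.support, x ∈ S → x = a ∨ x = b) ∧ ∃ e ∈ q.edges, P e := by
  classical
  induction hn : p.length using Nat.strong_induction_on generalizing u w with
  | _ n ih =>
  by_cases! hx : ∃ x ∈ p.support, x ∈ S ∧ x ≠ u ∧ x ≠ w
  · obtain ⟨x, hxp, hxS, hxu, hxw⟩ := hx
    obtain ⟨e, he, hPe⟩ := he
    rw [← p.take_spec hxp, edges_append, List.mem_append] at he
    rcases he with he | he
    · exact ih _ (hn ▸ length_takeUntil_lt_length hxp hxw) (hp.takeUntil hxp) hu hxS
        ⟨e, he, hPe⟩ rfl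
    · exact ih _ (hn ▸ length_dropUntil_lt_length hxp hxu) (hp.dropUntil hxp) hxS hw
        ⟨e, he, hPe⟩ rfl
  · exact ⟨u, w, p, hp, hu, hw, fun x hxp hxS ↦ or_iff_not_imp_left.mpr (hx x hxp hxS), he⟩

end Walk

open Walk

lemma Subgraph.eq_top_of_isCycle_of_toSubgraph_le
    (hmin : ∀ K : G.Subgraph, K ≠ ⊤ → K.coe.AtMostOneCycle) {K : G.Subgraph}
    {v₁ v₂ : V} {c₁ : G.Walk v₁ v₁} {c₂ : G.Walk v₂ v₂} (hc₁ : c₁.IsCycle) (hc₂ : c₂.IsCycle)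
    (h₁ : c₁.toSubgraph ≤ K) (h₂ : c₂.toSubgraph ≤ K) (hne : c₁.edgeSet ≠ c₂.edgeSet) :
    K = ⊤ := by
  by_contra hK
  obtain ⟨x₁, d₁, hd₁, he₁⟩ := hc₁.exists_isCycle_coe_subgraph h₁
  obtain ⟨x₂, d₂, hd₂, he₂⟩ := hc₂.exists_isCycle_coe_subgraph h₂
  exact hne (by rw [← he₁, ← he₂, hmin K hK x₁ x₂ d₁ d₂ hd₁ hd₂])

lemma isThetaGraph_of_isCycle_append (hmin : ∀ K : G.Subgraph, K ≠ ⊤ → K.coe.AtMostOneCycle)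
    {p₁ : G.Walk u w} {p₂ : G.Walk w u} (hc : (p₁.append p₂).IsCycle) (huw : u ≠ w)
    {q : G.Walk u w} (hq : q.IsPath)
    (hqc : ∀ x ∈ q.support, x ∈ (p₁.append p₂).support → x = u ∨ x = w)
    (he : ¬q.edgeSet ⊆ (p₁.append p₂).edgeSet) : G.IsThetaGraph := by
  obtain ⟨hp₁, hp₂, h₁₂⟩ := hc.isPath_and_internallyDisjoint_of_append huw
  have h₁q : p₁.InternallyDisjoint q := fun x hx hxq ↦
    hqc x hxq ((mem_support_append_iff _ _).mpr (Or.inl hx))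
  have h₂q : p₂.reverse.InternallyDisjoint q := fun x hx hxq ↦
    hqc x hxq ((mem_support_append_iff _ _).mpr (Or.inr (by simpa using hx)))
  obtain ⟨e, heq, hec⟩ := Set.not_subset.mp he
  rw [Walk.mem_edgeSet] at heq hec
  simp only [edges_append, List.mem_append, not_or] at hec
  have hne₁ : p₁ ≠ q := by
    rintro rfl
    exact hec.1 heq
  have hne₂ : p₂.reverse ≠ q := by
    rintro rfl
    exact hec.2 (by simpa using heq)
  have htop : (p₁.append p₂).toSubgraph ⊔ q.toSubgraph = ⊤ := by
    refine Subgraph.eq_top_of_isCycle_of_toSubgraph_le hmin hc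
      (hp₁.isCycle_append_reverse hq h₁q hne₁) le_sup_left ?_ fun h ↦ ?_
    · simp only [toSubgraph_append, toSubgraph_reverse]
      exact sup_le_sup_right le_sup_left _
    · have : e ∈ (p₁.append q.reverse).edgeSet := by simp [Walk.mem_edgeSet, heq]
      rw [← h, Walk.mem_edgeSet, edges_append, List.mem_append] at this
      exact this.elim hec.1 hec.2
  rw [toSubgraph_append, ← toSubgraph_reverse p₂] at htop
  refine ⟨u, w, huw, p₁, p₂.reverse, q, hp₁, hp₂.reverse, hq, h₁₂, h₁q, h₂q, ?_,
    fun h ↦ hne₁ (eq_of_length_le_one h.1.le h.2.le),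
    fun h ↦ hne₂ (eq_of_length_le_one h.1.le h.2.le), ?_, fun x ↦ ?_⟩
  · have := hc.three_le_length
    rw [length_append] at this
    rw [length_reverse]
    omega
  · simpa [Set.union_assoc] using (congrArg Subgraph.edgeSet htop).symm
  · simpa [Set.union_assoc] using congrArg (x ∈ ·.verts) htop

lemma isThetaGraph_of_ear (hmin : ∀ K : G.Subgraph, K ≠ ⊤ → K.coe.AtMostOneCycle)
    {c : G.Walk v v} (hc : c.IsCycle) {q : G.Walk u w} (hq : q.IsPath) (hu : u ∈ c.support)
    (hw : w ∈ c.support) (hqc : ∀ x ∈ q.support, x ∈ c.support → x = u ∨ x = w)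
    (he : ¬q.edgeSet ⊆ c.edgeSet) : G.IsThetaGraph := by
  have huw : u ≠ w := by
    rintro rfl
    exact he (by simp [(isPath_iff_nil.mp hq).eq_nil])
  obtain ⟨p₁, p₂, hcyc, hsub⟩ := hc.exists_isCycle_append hu hw
  have hsupp : ∀ x, x ∈ (p₁.append p₂).support ↔ x ∈ c.support := fun x ↦ by
    rw [← mem_verts_toSubgraph, hsub, mem_verts_toSubgraph]
  have hedges : (p₁.append p₂).edgeSet = c.edgeSet := by
    rw [← edgeSet_toSubgraph, hsub, edgeSet_toSubgraph]
  exact isThetaGraph_of_isCycle_append hmin hcyc huw hq (by simpa only [hsupp] using hqc)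
    (hedges ▸ he)

lemma isThetaGraph_of_isCycle_of_isCycle
    (hmin : ∀ K : G.Subgraph, K ≠ ⊤ → K.coe.AtMostOneCycle) {v₁ v₂ : V}
    {c₁ : G.Walk v₁ v₁} {c₂ : G.Walk v₂ v₂} (hc₁ : c₁.IsCycle) (hc₂ : c₂.IsCycle)
    (hu₁ : u ∈ c₁.support) (hu₂ : u ∈ c₂.support) (hw₁ : w ∈ c₁.support)
    (hw₂ : w ∈ c₂.support) (huw : u ≠ w) (he : ¬c₂.edgeSet ⊆ c₁.edgeSet) :
    G.IsThetaGraph := by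
  obtain ⟨e, he₂, he₁⟩ := Set.not_subset.mp he
  obtain ⟨p, hp, hep⟩ := hc₂.exists_isPath_mem_edges hu₂ hw₂ huw he₂
  obtain ⟨a, b, q, hq, ha, hb, hqc, e', he'q, he'c⟩ :=
    hp.exists_ear (S := {x | x ∈ c₁.support}) (P := (· ∉ c₁.edges)) hu₁ hw₁ ⟨e, hep, he₁⟩
  exact isThetaGraph_of_ear hmin hc₁ hq ha hb hqc (Set.not_subset.mpr ⟨e', he'q, he'c⟩)

end SimpleGraph

theorem min_two_cycles_structure_general {V : Type} (H : SimpleGraph V)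
    (h2 : TwoDistinctCycles H)
    (hmin : ∀ H' : H.Subgraph, H' ≠ ⊤ →
      ∀ (v1 v2 : H'.verts) (c1 : H'.coe.Walk v1 v1) (c2 : H'.coe.Walk v2 v2),
        c1.IsCycle → c2.IsCycle → {e | e ∈ c1.edges} = {e | e ∈ c2.edges}) :
    -- `H` is the union of two cycles intersecting in at most one vertex …
    (∃ (v1 v2 : V) (c1 : H.Walk v1 v1) (c2 : H.Walk v2 v2),
      c1.IsCycle ∧ c2.IsCycle ∧
      H.edgeSet = {e | e ∈ c1.edges} ∪ {e | e ∈ c2.edges} ∧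
      (∀ x : V, x ∈ c1.support ∨ x ∈ c2.support) ∧
      {x | x ∈ c1.support ∧ x ∈ c2.support}.Subsingleton) ∨
    -- … or a theta graph: three internally disjoint paths with common distinct endvertices,
    -- at most one of them of length one.
    (∃ (u w : V), u ≠ w ∧ ∃ (p1 p2 p3 : H.Walk u w),
      p1.IsPath ∧ p2.IsPath ∧ p3.IsPath ∧
      (∀ x, x ∈ p1.support → x ∈ p2.support → x = u ∨ x = w) ∧
      (∀ x, x ∈ p1.support → x ∈ p3.support → x = u ∨ x = w) ∧
      (∀ x, x ∈ p2.support → x ∈ p3.support → x = u ∨ x = w) ∧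
      ¬(p1.length = 1 ∧ p2.length = 1) ∧ ¬(p1.length = 1 ∧ p3.length = 1) ∧
      ¬(p2.length = 1 ∧ p3.length = 1) ∧
      H.edgeSet = {e | e ∈ p1.edges} ∪ {e | e ∈ p2.edges} ∪ {e | e ∈ p3.edges} ∧
      (∀ x : V, x ∈ p1.support ∨ x ∈ p2.support ∨ x ∈ p3.support)) := by
  obtain ⟨v₁, v₂, c₁, c₂, hc₁, hc₂, hne⟩ := h2
  by_cases hmeet : {x | x ∈ c₁.support ∧ x ∈ c₂.support}.Subsingleton
  · have htop := Subgraph.eq_top_of_isCycle_of_toSubgraph_le hmin hc₁ hc₂ le_sup_left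
      le_sup_right hne
    refine Or.inl ⟨v₁, v₂, c₁, c₂, hc₁, hc₂, ?_, fun x ↦ ?_, hmeet⟩
    · show H.edgeSet = c₁.edgeSet ∪ c₂.edgeSet
      simpa using (congrArg Subgraph.edgeSet htop).symm
    · simpa using congrArg (x ∈ ·.verts) htop
  · obtain ⟨s, ⟨hs₁, hs₂⟩, s', ⟨hs'₁, hs'₂⟩, hss'⟩ := Set.not_subsingleton_iff.mp hmeet
    refine Or.inr ?_
    by_cases he : c₂.edgeSet ⊆ c₁.edgeSet
    · exact isThetaGraph_of_isCycle_of_isCycle hmin hc₂ hc₁ hs₂ hs₁ hs'₂ hs'₁ hss'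
        fun h ↦ hne (h.antisymm he)
    · exact isThetaGraph_of_isCycle_of_isCycle hmin hc₁ hc₂ hs₁ hs₂ hs'₁ hs'₂ hss' he

/-- If a finite graph `H` contains at least two distinct cycles but
every proper subgraph of `H` contains at most one cycle, then `H` is either the union of
two cycles intersecting in at most one vertex, or a theta graph. -/
theorem min_two_cycles_structure {V : Type} [Fintype V] (H : SimpleGraph V)
    (h2 : TwoDistinctCycles H)
    (hmin : ∀ H' : H.Subgraph, H' ≠ ⊤ →
      ∀ (v1 v2 : H'.verts) (c1 : H'.coe.Walk v1 v1) (c2 : H'.coe.Walk v2 v2),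
        c1.IsCycle → c2.IsCycle → {e | e ∈ c1.edges} = {e | e ∈ c2.edges}) :
    -- `H` is the union of two cycles intersecting in at most one vertex …
    (∃ (v1 v2 : V) (c1 : H.Walk v1 v1) (c2 : H.Walk v2 v2),
      c1.IsCycle ∧ c2.IsCycle ∧
      H.edgeSet = {e | e ∈ c1.edges} ∪ {e | e ∈ c2.edges} ∧
      (∀ x : V, x ∈ c1.support ∨ x ∈ c2.support) ∧
      {x | x ∈ c1.support ∧ x ∈ c2.support}.Subsingleton) ∨
    -- … or a theta graph: three internally disjoint paths with common distinct endvertices,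
    -- at most one of them of length one.
    (∃ (u w : V), u ≠ w ∧ ∃ (p1 p2 p3 : H.Walk u w),
      p1.IsPath ∧ p2.IsPath ∧ p3.IsPath ∧
      (∀ x, x ∈ p1.support → x ∈ p2.support → x = u ∨ x = w) ∧
      (∀ x, x ∈ p1.support → x ∈ p3.support → x = u ∨ x = w) ∧
      (∀ x, x ∈ p2.support → x ∈ p3.support → x = u ∨ x = w) ∧
      ¬(p1.length = 1 ∧ p2.length = 1) ∧ ¬(p1.length = 1 ∧ p3.length = 1) ∧
      ¬(p2.length = 1 ∧ p3.length = 1) ∧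
      H.edgeSet = {e | e ∈ p1.edges} ∪ {e | e ∈ p2.edges} ∪ {e | e ∈ p3.edges} ∧
      (∀ x : V, x ∈ p1.support ∨ x ∈ p2.support ∨ x ∈ p3.support)) :=
  min_two_cycles_structure_general H h2 hmin
end

section
/- Every 5/2-critical graph has minimum degree at least two and contains no k-string with k ≥ 3. -/
open SimpleGraph

/-!
A vertex `v` of degree at most one cannot occur: a `C₅`-colouring of `G - v` extends to `v`,
because every vertex of `C₅` has a neighbour. Nor can a string with at least four edges: delete
one of its interior edges, `C₅`-colour what remains, and recolour the interior of the string along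
a walk of `C₅` of the same length between the colours of its ends, which exists because `C₅` has
walks of every length `≥ 4` between any two of its vertices.
-/

namespace SimpleGraph

variable {V W : Type*} {G : SimpleGraph V} {K : SimpleGraph W}

lemma Subgraph.exists_map_of_hom [Inhabited W] (H : G.Subgraph) (φ : H.coe →g K) :
    ∃ f : V → W, ∀ ⦃a b⦄, H.Adj a b → K.Adj (f a) (f b) := by
  classical
  refine ⟨fun w ↦ if h : w ∈ H.verts then φ ⟨w, h⟩ else default, fun a b hab ↦ ?_⟩
  simpa [H.edge_vert hab, H.edge_vert hab.symm] using φ.map_adj hab.coe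

lemma exists_hom_of_neighborSet_subsingleton (hK : ∀ x, ∃ y, K.Adj x y) {v : V}
    (hv : (G.neighborSet v).Subsingleton) (f : V → W)
    (hf : ∀ ⦃a b⦄, G.Adj a b → a ≠ v → b ≠ v → K.Adj (f a) (f b)) : Nonempty (G →g K) := by
  classical
  by_cases hnbr : ∃ b, G.Adj v b
  · obtain ⟨b, hb⟩ := hnbr
    obtain ⟨z, hz⟩ := hK (f b)
    have hbv : b ≠ v := hb.ne.symm
    have key : ∀ ⦃b'⦄, G.Adj v b' →
        K.Adj (Function.update f v z v) (Function.update f v z b') := by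
      intro b' hb'
      obtain rfl : b' = b := hv hb' hb
      simpa [hbv] using hz.symm
    refine ⟨⟨Function.update f v z, fun {a a'} h ↦ ?_⟩⟩
    by_cases ha : a = v
    · subst ha; exact key h
    by_cases ha' : a' = v
    · subst ha'; exact (key h.symm).symm
    simpa [ha, ha'] using hf h ha ha'
  · simp only [not_exists] at hnbr
    exact ⟨⟨f, fun {a a'} h ↦
      hf h (fun ha ↦ hnbr a' (ha ▸ h)) (fun ha' ↦ hnbr a (ha' ▸ h.symm))⟩⟩

open Fin.CommRing in
lemma exists_seq_cycleGraph_odd (m : ℕ) (a b : Fin (2 * m + 3)) {n : ℕ}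
    (hn : 2 * m + 2 ≤ n) : ∃ c : ℕ → Fin (2 * m + 3),
      c 0 = a ∧ c n = b ∧ ∀ i, (cycleGraph (2 * m + 3)).Adj (c i) (c (i + 1)) := by
  -- Step back `j` times, then forward: `2 j ≡ n - (b - a)`, and `m + 2` inverts `2` mod `2m + 3`.
  set j : ℕ := ((n - (b - a)) * (m + 2) : Fin (2 * m + 3)).val with hj
  have hjn : j ≤ n := by have := ((n - (b - a)) * (m + 2) : Fin (2 * m + 3)).isLt; omega
  refine ⟨fun i ↦ a + i - 2 * (min i j : ℕ), by simp, ?_, fun i ↦ ?_⟩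
  · have hzero : ((2 * m + 3 : ℕ) : Fin (2 * m + 3)) = 0 := Fin.natCast_self _
    beta_reduce
    rw [min_eq_right hjn, hj, Fin.cast_val_eq_self]
    push_cast at hzero
    linear_combination (b - a - n) * hzero
  · beta_reduce
    rw [cycleGraph_adj (n := 2 * m + 1)]
    rcases lt_or_ge i j with hij | hij
    · left
      rw [min_eq_left (by omega : i + 1 ≤ j), min_eq_left hij.le]
      push_cast; ring
    · right
      rw [min_eq_right (by omega : j ≤ i + 1), min_eq_right hij]
      push_cast; ring

namespace Walk

variable {u v : V}

def interiorVerts (p : G.Walk u v) : Set V :=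
  {w | ∃ i, 0 < i ∧ i < p.length ∧ p.getVert i = w}

lemma IsPath.interiorVerts_subset {p : G.Walk u v} (hp : p.IsPath) :
    p.interiorVerts ⊆ {w | w ∈ p.support ∧ w ≠ u ∧ w ≠ v} := by
  rintro _ ⟨i, hi0, hi, rfl⟩
  refine ⟨p.getVert_mem_support i, ?_, ?_⟩
  · rw [Ne, hp.getVert_eq_start_iff hi.le]; omega
  · rw [Ne, hp.getVert_eq_end_iff hi.le]; omega

lemma IsPath.neighborSet_getVert {p : G.Walk u v} (hp : p.IsPath) {i : ℕ} (hi0 : 0 < i)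
    (hi : i < p.length) (hdeg : (G.neighborSet (p.getVert i)).ncard = 2) :
    G.neighborSet (p.getVert i) = {p.getVert (i - 1), p.getVert (i + 1)} := by
  have hprev : G.Adj (p.getVert i) (p.getVert (i - 1)) := by
    simpa [Nat.sub_add_cancel hi0] using (p.adj_getVert_succ (i := i - 1) (by omega)).symm
  have hne : p.getVert (i - 1) ≠ p.getVert (i + 1) := fun h ↦ by
    have := hp.getVert_injOn (by simp; omega) (by simp; omega) h
    omega
  symm
  refine Set.eq_of_subset_of_ncard_le ?_ ?_ (Set.finite_of_ncard_ne_zero (by omega))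
  · rintro b (rfl | rfl)
    exacts [hprev, p.adj_getVert_succ hi]
  · rw [hdeg, Set.ncard_pair hne]

lemma IsPath.exists_hom_of_reroute {p : G.Walk u v} (hp : p.IsPath)
    (hdeg : ∀ w ∈ p.interiorVerts, (G.neighborSet w).ncard = 2) (f : V → W)
    (hf : ∀ ⦃a b⦄, G.Adj a b → a ∉ p.interiorVerts → b ∉ p.interiorVerts → K.Adj (f a) (f b))
    (c : ℕ → W) (hc0 : c 0 = f u) (hcn : c p.length = f v)
    (hc : ∀ i < p.length, K.Adj (c i) (c (i + 1))) : Nonempty (G →g K) := by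
  classical
  let g : V → W := fun w ↦ if h : w ∈ p.interiorVerts then c h.choose else f w
  have hg_off : ∀ w ∉ p.interiorVerts, g w = f w := fun w hw ↦ dif_neg hw
  have hg_path : ∀ i ≤ p.length, g (p.getVert i) = c i := by
    intro i hi
    by_cases hw : p.getVert i ∈ p.interiorVerts
    · have hj := hw.choose_spec
      simp only [g, dif_pos hw]
      rw [hp.getVert_injOn (by simp; omega) (by simpa using hi) hj.2.2]
    · rw [hg_off _ hw]
      obtain rfl | rfl : i = 0 ∨ i = p.length := by
        by_contra! h
        exact hw ⟨i, by omega, by omega, rfl⟩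
      exacts [by simp [hc0], by simp [hcn]]
  have hg_interior : ∀ ⦃a b⦄, G.Adj a b → a ∈ p.interiorVerts → K.Adj (g a) (g b) := by
    rintro a b hab ⟨i, hi0, hi, rfl⟩
    have hb : b ∈ G.neighborSet (p.getVert i) := hab
    rw [hp.neighborSet_getVert hi0 hi (hdeg _ ⟨i, hi0, hi, rfl⟩)] at hb
    rcases hb with rfl | rfl
    · rw [hg_path i hi.le, hg_path (i - 1) (by omega)]
      simpa [Nat.sub_add_cancel hi0] using (hc (i - 1) (by omega)).symm
    · rw [hg_path i hi.le, hg_path (i + 1) hi]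
      exact hc i hi
  refine ⟨⟨g, fun {a b} hab ↦ ?_⟩⟩
  by_cases ha : a ∈ p.interiorVerts
  · exact hg_interior hab ha
  by_cases hb : b ∈ p.interiorVerts
  · exact (hg_interior hab.symm hb).symm
  rw [hg_off a ha, hg_off b hb]
  exact hf hab ha hb

end Walk

end SimpleGraph

lemma Critical52.exists_map_of_ne_top {V : Type} {G : SimpleGraph V} (hG : Critical52 G)
    {H : G.Subgraph} (hH : H ≠ ⊤) :
    ∃ f : V → Fin 5, ∀ ⦃a b⦄, H.Adj a b → (cycleGraph 5).Adj (f a) (f b) :=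
  (hG.2 H hH).elim H.exists_map_of_hom

/-- Every 5/2-critical graph has minimum degree at least two and
contains no `k`-string with `k ≥ 3` (a `k`-string has `k+1` edges). -/
theorem critical52_minDegree_and_no_long_strings {V : Type} [Fintype V] (G : SimpleGraph V)
    (hcrit : Critical52 G) :
    (∀ v : V, 2 ≤ deg G v) ∧
    (∀ k : ℕ, 3 ≤ k → ∀ (u v : V) (p : G.Walk u v), IsString G p → p.length ≠ k + 1) := by
  refine ⟨fun v ↦ ?_, fun k hk u v p hp hlen ↦ ?_⟩
  · by_contra! hv
    have hsub : (G.neighborSet v).Subsingleton :=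
      Set.ncard_le_one_iff_subsingleton.mp (Nat.le_of_lt_succ hv)
    have hne : (⊤ : G.Subgraph).deleteVerts {v} ≠ ⊤ := fun h ↦ by
      simpa using congrArg (v ∈ ·.verts) h
    obtain ⟨f, hf⟩ := hcrit.exists_map_of_ne_top hne
    have hC5 : ∀ x : Fin 5, ∃ y, (cycleGraph 5).Adj x y := fun x ↦ ⟨x + 1, by simp [cycleGraph_adj]⟩
    exact hcrit.1.false (exists_hom_of_neighborSet_subsingleton hC5 hsub f
      fun a b hab ha hb ↦ hf (by simpa [ha, hb] using hab)).some
  · obtain ⟨hpath, -, -, -, hdeg⟩ := hp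
    have h1 : p.getVert 1 ∈ p.interiorVerts := ⟨1, one_pos, by omega, rfl⟩
    have hne : (⊤ : G.Subgraph).deleteEdges {s(p.getVert 1, p.getVert 2)} ≠ ⊤ := fun h ↦ by
      simpa [p.adj_getVert_succ (i := 1) (by omega)] using
        congrArg (·.Adj (p.getVert 1) (p.getVert 2)) h
    obtain ⟨f, hf⟩ := hcrit.exists_map_of_ne_top hne
    obtain ⟨c, hc0, hcn, hc⟩ := exists_seq_cycleGraph_odd 1 (f u) (f v) (n := p.length) (by omega)
    refine hcrit.1.false (hpath.exists_hom_of_reroute (fun w hw ↦ ?_) f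
      (fun a b hab ha hb ↦ hf ?_) c hc0 hcn fun i _ ↦ hc i).some
    · obtain ⟨hws, hwu, hwv⟩ := hpath.interiorVerts_subset hw
      exact hdeg w hws hwu hwv
    · have ha1 : a ≠ p.getVert 1 := fun h ↦ ha (h ▸ h1)
      have hb1 : b ≠ p.getVert 1 := fun h ↦ hb (h ▸ h1)
      simp [hab, ha1, hb1]
end

section
/- Let K = v1 v2 v3 v4 v5 be a 5-cycle in a triangle-free graph G such that v1, v2, and v4 have degree three in G and v3 and v5 have degree two in G. Let u1, u2, and u4 be the neighbors of v1, v2, and v4, respectively, not contained in K. Let ψ be a graph homomorphism from G − V(K) to a 5-cycle C. If ψ(u1) is adjacent to ψ(u2) in C, then ψ extends to a graph homomorphism from G to C. -/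
open SimpleGraph

/-!
On the cell, an extension of `ψ` is a homomorphism `C₅ → C₅` read along `v₁ v₂ v₃ v₄ v₅`; we look
for one among the rotations and reflections `i ↦ s ± i`. The degree conditions make `K` an
induced cycle whose only edges to the rest of `G` are `v₁u₁`, `v₂u₂`, `v₄u₄`, so such a map
extends `ψ` as soon as the images of `v₁, v₂, v₄` are adjacent to `ψ u₁, ψ u₂, ψ u₄`. A finite
check over the ten rotations and reflections shows that these three constraints can always be met
when `ψ u₁` and `ψ u₂` are adjacent.
-/

section Degree

variable {V : Type} {G : SimpleGraph V}

theorem eq_neighborSet_of_subset_of_deg_le {v : V} {s : Set V} (hsub : s ⊆ G.neighborSet v)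
    (hle : deg G v ≤ s.ncard) (hpos : 0 < deg G v) : s = G.neighborSet v :=
  Set.eq_of_subset_of_ncard_le hsub hle (Set.finite_of_ncard_pos hpos)

theorem neighborSet_eq_of_deg_eq_three {v a b c : V} (hdeg : deg G v = 3) (hab : a ≠ b)
    (hac : a ≠ c) (hbc : b ≠ c) (ha : G.Adj v a) (hb : G.Adj v b) (hc : G.Adj v c) :
    G.neighborSet v = {a, b, c} := by
  refine (eq_neighborSet_of_subset_of_deg_le ?_ ?_ (by omega)).symm
  · rintro x (rfl | rfl | rfl) <;> assumption
  · rw [hdeg, Set.ncard_eq_three.mpr ⟨a, b, c, hab, hac, hbc, rfl⟩]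

theorem neighborSet_eq_of_deg_eq_two {v a b : V} (hdeg : deg G v = 2) (hab : a ≠ b)
    (ha : G.Adj v a) (hb : G.Adj v b) : G.neighborSet v = {a, b} := by
  refine (eq_neighborSet_of_subset_of_deg_le ?_ ?_ (by omega)).symm
  · rintro x (rfl | rfl) <;> assumption
  · rw [hdeg, Set.ncard_pair hab]

end Degree

namespace SimpleGraph

theorem exists_hom_extend_of_induce_compl {V W ι : Type*} {G : SimpleGraph V} {H : SimpleGraph W}
    {S : Set V} (c : ι → V) (hc : Function.Injective c)
    (hS : Set.range c = S) (σ : ι → W) (hin : ∀ i j, G.Adj (c i) (c j) → H.Adj (σ i) (σ j))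
    (ψ : G.induce Sᶜ →g H)
    (hcross : ∀ i y (hy : y ∈ Sᶜ), G.Adj (c i) y → H.Adj (σ i) (ψ ⟨y, hy⟩)) :
    ∃ φ : G →g H, ∀ x (hx : x ∈ Sᶜ), φ x = ψ ⟨x, hx⟩ := by
  classical
  subst hS
  let f : V → W := fun x => if hx : x ∈ Set.range c then σ hx.choose else ψ ⟨x, hx⟩
  have hf_in (i : ι) : f (c i) = σ i := by
    have hi : c i ∈ Set.range c := ⟨i, rfl⟩
    simp only [f, dif_pos hi]
    exact congrArg σ (hc hi.choose_spec)
  have hf_out (x : V) (hx : x ∈ (Set.range c)ᶜ) : f x = ψ ⟨x, hx⟩ := dif_neg hx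
  refine ⟨⟨f, fun {x y} hxy => ?_⟩, hf_out⟩
  by_cases hx : x ∈ Set.range c <;> by_cases hy : y ∈ Set.range c
  · obtain ⟨i, rfl⟩ := hx
    obtain ⟨j, rfl⟩ := hy
    simpa only [hf_in] using hin i j hxy
  · obtain ⟨i, rfl⟩ := hx
    simpa only [hf_in, hf_out y hy] using hcross i y hy hxy
  · obtain ⟨j, rfl⟩ := hy
    simpa only [hf_in, hf_out x hx] using (hcross j x hx hxy.symm).symm
  · simpa only [hf_out x hx, hf_out y hy] using ψ.map_adj (induce_adj.mpr hxy)

theorem cycleGraph_adj_add_mul {n : ℕ} (s ε : Fin (n + 2)) (hε : ε = 1 ∨ ε = -1)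
    {u v : Fin (n + 2)} (h : (cycleGraph (n + 2)).Adj u v) :
    (cycleGraph (n + 2)).Adj (s + ε * u) (s + ε * v) := by
  rw [cycleGraph_adj] at h ⊢
  rcases hε with rfl | rfl
  · simpa using h
  · simp only [neg_mul, one_mul, add_sub_add_left_eq_sub, sub_neg_eq_add, neg_add_eq_sub]
    exact h.symm

def cycleGraph.affineHom {n : ℕ} (s ε : Fin (n + 2)) (hε : ε = 1 ∨ ε = -1) :
    cycleGraph (n + 2) →g cycleGraph (n + 2) where
  toFun i := s + ε * i
  map_rel' := cycleGraph_adj_add_mul s ε hε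

theorem exists_cycleGraph_five_hom_adj (a b c : Fin 5) (hab : (cycleGraph 5).Adj a b) :
    ∃ σ : cycleGraph 5 →g cycleGraph 5,
      (cycleGraph 5).Adj (σ 0) a ∧ (cycleGraph 5).Adj (σ 1) b ∧ (cycleGraph 5).Adj (σ 3) c := by
  have : ∀ a b c : Fin 5, (cycleGraph 5).Adj a b → ∃ s ε : Fin 5, (ε = 1 ∨ ε = -1) ∧
      (cycleGraph 5).Adj (s + ε * 0) a ∧ (cycleGraph 5).Adj (s + ε * 1) b ∧
      (cycleGraph 5).Adj (s + ε * 3) c := by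
    decide
  obtain ⟨s, ε, hε, h⟩ := this a b c hab
  exact ⟨cycleGraph.affineHom s ε hε, h⟩

end SimpleGraph

theorem extend_from_three_cell_general {V : Type} (G : SimpleGraph V)
    (v1 v2 v3 v4 v5 u1 u2 u4 : V)
    (hK : [v1, v2, v3, v4, v5].Nodup)
    (h12 : G.Adj v1 v2) (h23 : G.Adj v2 v3) (h34 : G.Adj v3 v4)
    (h45 : G.Adj v4 v5) (h51 : G.Adj v5 v1)
    (hd1 : deg G v1 = 3) (hd2 : deg G v2 = 3) (hd4 : deg G v4 = 3)
    (hd3 : deg G v3 = 2) (hd5 : deg G v5 = 2)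
    (hu1 : G.Adj v1 u1) (hu2 : G.Adj v2 u2) (hu4 : G.Adj v4 u4)
    (hu1K : u1 ∈ ({v1, v2, v3, v4, v5} : Set V)ᶜ)
    (hu2K : u2 ∈ ({v1, v2, v3, v4, v5} : Set V)ᶜ)
    (hu4K : u4 ∈ ({v1, v2, v3, v4, v5} : Set V)ᶜ)
    (ψ : G.induce ({v1, v2, v3, v4, v5} : Set V)ᶜ →g cycleGraph 5)
    (hadj : (cycleGraph 5).Adj (ψ ⟨u1, hu1K⟩) (ψ ⟨u2, hu2K⟩)) :
    ∃ φ : G →g cycleGraph 5,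
      ∀ (x : V) (hx : x ∈ ({v1, v2, v3, v4, v5} : Set V)ᶜ), φ x = ψ ⟨x, hx⟩ := by
  have hc : Function.Injective ![v1, v2, v3, v4, v5] := List.nodup_ofFn.mp hK
  simp only [List.nodup_cons, List.mem_cons, List.not_mem_nil, or_false, not_or,
    List.nodup_nil, and_true] at hK
  obtain ⟨⟨n12, n13, n14, n15⟩, ⟨n23, n24, n25⟩, ⟨n34, n35⟩, n45, -⟩ := hK
  have hout {x : V} (hx : x ∈ ({v1, v2, v3, v4, v5} : Set V)ᶜ) :
      x ≠ v1 ∧ x ≠ v2 ∧ x ≠ v3 ∧ x ≠ v4 ∧ x ≠ v5 := by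
    simpa only [Set.mem_compl_iff, Set.mem_insert_iff, Set.mem_singleton_iff, not_or] using hx
  obtain ⟨m11, m12, m13, m14, m15⟩ := hout hu1K
  obtain ⟨m21, m22, m23, m24, m25⟩ := hout hu2K
  obtain ⟨m41, m42, m43, m44, m45⟩ := hout hu4K
  have hN1 := neighborSet_eq_of_deg_eq_three hd1 n25 m12.symm m15.symm h12 h51.symm hu1
  have hN2 := neighborSet_eq_of_deg_eq_three hd2 n13 m21.symm m23.symm h12.symm h23 hu2
  have hN3 := neighborSet_eq_of_deg_eq_two hd3 n24 h23.symm h34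
  have hN4 := neighborSet_eq_of_deg_eq_three hd4 n35 m43.symm m45.symm h34.symm h45 hu4
  have hN5 := neighborSet_eq_of_deg_eq_two hd5 (Ne.symm n14) h45.symm h51
  obtain ⟨σ, hσ1, hσ2, hσ4⟩ := exists_cycleGraph_five_hom_adj _ _ (ψ ⟨u4, hu4K⟩) hadj
  refine exists_hom_extend_of_induce_compl ![v1, v2, v3, v4, v5] hc
    (by simp only [Matrix.range_cons, Matrix.range_empty, Set.union_empty, Set.singleton_union])
    σ (fun i j hij => σ.map_adj ?_) ψ (fun i y hy hiy => ?_)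
  · rw [← mem_neighborSet] at hij
    fin_cases i <;> fin_cases j <;> simp only [Fin.zero_eta, Fin.mk_one, Fin.reduceFinMk,
      Fin.isValue, Matrix.cons_val_zero, Matrix.cons_val_one, Matrix.cons_val, hN1, hN2, hN3, hN4,
      hN5, Set.mem_insert_iff, Set.mem_singleton_iff] at hij ⊢
    all_goals first | decide | grind
  · rw [← mem_neighborSet] at hiy
    fin_cases i <;> simp only [Fin.zero_eta, Fin.mk_one, Fin.reduceFinMk,
      Fin.isValue, Matrix.cons_val_zero, Matrix.cons_val_one, Matrix.cons_val, hN1, hN2, hN3, hN4,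
      hN5, Set.mem_insert_iff, Set.mem_singleton_iff] at hiy ⊢
    all_goals obtain rfl | rfl | rfl := hiy
    all_goals first | exact hσ1 | exact hσ2 | exact hσ4 | simp at hy

/-- Let `K = v1 v2 v3 v4 v5` be a 5-cycle in a triangle-free graph `G`,
where `v1, v2, v4` have degree three and `v3, v5` have degree two, and let `u1, u2, u4`
be the neighbors of `v1, v2, v4` outside `K`. Any homomorphism `ψ` from `G - V(K)` to the
5-cycle with `ψ u1` adjacent to `ψ u2` extends to a homomorphism from `G`. -/
theorem extend_from_three_cell {V : Type} [Fintype V] (G : SimpleGraph V)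
    (htf : ∀ (w : V) (c : G.Walk w w), c.IsCycle → c.length ≠ 3)
    (v1 v2 v3 v4 v5 u1 u2 u4 : V)
    (hK : [v1, v2, v3, v4, v5].Nodup)
    (h12 : G.Adj v1 v2) (h23 : G.Adj v2 v3) (h34 : G.Adj v3 v4)
    (h45 : G.Adj v4 v5) (h51 : G.Adj v5 v1)
    (hd1 : deg G v1 = 3) (hd2 : deg G v2 = 3) (hd4 : deg G v4 = 3)
    (hd3 : deg G v3 = 2) (hd5 : deg G v5 = 2)
    (hu1 : G.Adj v1 u1) (hu2 : G.Adj v2 u2) (hu4 : G.Adj v4 u4)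
    (hu1K : u1 ∈ ({v1, v2, v3, v4, v5} : Set V)ᶜ)
    (hu2K : u2 ∈ ({v1, v2, v3, v4, v5} : Set V)ᶜ)
    (hu4K : u4 ∈ ({v1, v2, v3, v4, v5} : Set V)ᶜ)
    (ψ : G.induce ({v1, v2, v3, v4, v5} : Set V)ᶜ →g cycleGraph 5)
    (hadj : (cycleGraph 5).Adj (ψ ⟨u1, hu1K⟩) (ψ ⟨u2, hu2K⟩)) :
    ∃ φ : G →g cycleGraph 5,
      ∀ (x : V) (hx : x ∈ ({v1, v2, v3, v4, v5} : Set V)ᶜ), φ x = ψ ⟨x, hx⟩ :=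
  extend_from_three_cell_general G v1 v2 v3 v4 v5 u1 u2 u4 hK h12 h23 h34 h45 h51 hd1 hd2 hd4 hd3
    hd5 hu1 hu2 hu4 hu1K hu2K hu4K ψ hadj
end
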